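/- arXiv:1411.0222 — 3 statements merged into one kernel-verified Lean document; each statement's English description precedes it below -/
import Mathlib

section
/- The mixed composition product distributes to the left over the shuffle product: for all c, d ∈ ℝ⟨⟨X⟩⟩ and e_δ = (e_L, e_R), one has (c ⧢ d) ∘̃ e_δ = (c ∘̃ e_δ) ⧢ (d ∘̃ e_δ). -/
/-!
The left quotient `x⁻¹` by a letter is a derivation of the shuffle algebra, and on a mixed
composition it acts by `x₁⁻¹(c ∘̃ e) = e_L ⧢ (x₁⁻¹c ∘̃ e)` and
`x₀⁻¹(c ∘̃ e) = x₀⁻¹c ∘̃ e + e_R ⧢ (x₁⁻¹c ∘̃ e)`, read off from the first letter of `φ_e(η)(1)`.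
Applying `x⁻¹` to both sides of the identity and using associativity and commutativity of `⧢`
reduces its coefficient at `x w` to instances of the identity inside shuffles evaluated at `w`.
Since the coefficient of a shuffle at `w` only involves coefficients at words no longer than `w`,
the identity follows by induction on the length of the word.
-/

/-- Formal power series over the alphabet `X = {x₀, x₁}` (encoded as `Bool`,
with `x₀ = false` and `x₁ = true`). -/
abbrev FPS := List Bool → ℝ

/-- The letter `x₀`. -/
def x₀ : Bool := false

/-- The letter `x₁`. -/
def x₁ : Bool := true

/-- Shuffle product of formal power series, via the left-quotient recursion. -/
noncomputable def shuffle : (List Bool → ℝ) → (List Bool → ℝ) → List Bool → ℝ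
  | c, d, [] => c [] * d []
  | c, d, x :: w => shuffle (fun u => c (x :: u)) d w + shuffle c (fun u => d (x :: u)) w

/-- The series `1` (the empty word). -/
noncomputable def oneF : FPS := fun w => match w with | [] => 1 | _ => 0

/-- The series corresponding to a single word. -/
noncomputable def ind (η : List Bool) : FPS := fun w => if w = η then 1 else 0

/-- Left catenation of the series `e` by a letter `x`: the series `x e`. -/
noncomputable def pre (x : Bool) (e : FPS) : FPS :=
  fun w => match w with
  | [] => 0
  | y :: u => if y = x then e u else 0

/-- The word-indexed family of endomorphisms `φ_d`, determined by
`φ_d(x₀)(e) = x₀ e` and `φ_d(x₁)(e) = x₁(d_L ⧢ e) + x₀(d_R ⧢ e)`. -/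
noncomputable def phiW (d : FPS × FPS) : List Bool → FPS → FPS
  | [], e => e
  | x :: η, e =>
      if x then pre x₁ (shuffle d.1 (phiW d η e)) + pre x₀ (shuffle d.2 (phiW d η e))
      else pre x₀ (phiW d η e)

/-- The mixed composition product `c ∘̃ d_δ = Σ_η (c,η) φ_d(η)(1)`.
(For each word `w` only the finitely many `η` with `|η| ≤ |w|` contribute.) -/
noncomputable def mixedComp (c : FPS) (d : FPS × FPS) : FPS :=
  fun w => ∑' η : List Bool, c η * phiW d η oneF w


def leftQuot (x : Bool) (c : FPS) : FPS := fun u => c (x :: u)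

theorem shuffle_nil (c d : FPS) : shuffle c d [] = c [] * d [] := rfl

theorem shuffle_cons (c d : FPS) (x : Bool) (w : List Bool) :
    shuffle c d (x :: w) = shuffle (leftQuot x c) d w + shuffle c (leftQuot x d) w := rfl

theorem leftQuot_shuffle (x : Bool) (c d : FPS) :
    leftQuot x (shuffle c d) = shuffle (leftQuot x c) d + shuffle c (leftQuot x d) := rfl

theorem shuffle_comm (c d : FPS) : shuffle c d = shuffle d c := by
  funext w
  induction w generalizing c d with
  | nil => exact mul_comm _ _
  | cons x w ih => rw [shuffle_cons, shuffle_cons, ih, ih c, add_comm]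

theorem shuffle_add_right (c d d' : FPS) : shuffle c (d + d') = shuffle c d + shuffle c d' := by
  funext w
  induction w generalizing c d d' with
  | nil => exact mul_add _ _ _
  | cons x w ih =>
    simp only [Pi.add_apply, shuffle_cons] at ih ⊢
    rw [ih, show leftQuot x (d + d') = leftQuot x d + leftQuot x d' from rfl, ih]
    ring

theorem shuffle_smul_right (a : ℝ) (c d : FPS) : shuffle c (a • d) = a • shuffle c d := by
  funext w
  induction w generalizing c d with
  | nil => exact mul_left_comm _ _ _
  | cons x w ih =>
    simp only [Pi.smul_apply, smul_eq_mul, shuffle_cons] at ih ⊢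
    rw [ih, show leftQuot x (a • d) = a • leftQuot x d from rfl, ih]
    ring

theorem shuffle_add_left (c c' d : FPS) : shuffle (c + c') d = shuffle c d + shuffle c' d := by
  rw [shuffle_comm, shuffle_add_right, shuffle_comm d, shuffle_comm d]

noncomputable def shuffleLeft (c : FPS) : FPS →ₗ[ℝ] FPS where
  toFun := shuffle c
  map_add' := shuffle_add_right c
  map_smul' a := shuffle_smul_right a c

theorem shuffle_assoc (a b c : FPS) : shuffle (shuffle a b) c = shuffle a (shuffle b c) := by
  funext w
  induction w generalizing a b c with
  | nil => exact mul_assoc _ _ _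
  | cons x w ih =>
    simp only [shuffle_cons, leftQuot_shuffle, shuffle_add_left, shuffle_add_right, Pi.add_apply,
      ih]
    ring

theorem shuffle_left_comm (a b c : FPS) : shuffle a (shuffle b c) = shuffle b (shuffle a c) := by
  rw [← shuffle_assoc, shuffle_comm a b, shuffle_assoc]

theorem shuffle_apply_congr_right {c d d' : FPS} {w : List Bool}
    (h : ∀ u : List Bool, u.length ≤ w.length → d u = d' u) : shuffle c d w = shuffle c d' w := by
  induction w generalizing c d d' with
  | nil => rw [shuffle_nil, shuffle_nil, h [] le_rfl]
  | cons x w ih =>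
    rw [shuffle_cons, shuffle_cons,
      ih fun u hu => h u (by simp only [List.length_cons]; omega),
      ih (d := leftQuot x d) (d' := leftQuot x d') fun u hu => h (x :: u) (by simpa using hu)]

theorem shuffle_apply_eq_zero_of_forall_length_le {c d : FPS} {w : List Bool}
    (h : ∀ u : List Bool, u.length ≤ w.length → d u = 0) : shuffle c d w = 0 := by
  rw [shuffle_apply_congr_right (d' := 0) h]
  exact congrFun ((shuffleLeft c).map_zero) w

section Words

variable (α : Type*) [Fintype α] [DecidableEq α]

def wordsUpTo : ℕ → Finset (List α)
  | 0 => {[]}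
  | n + 1 =>
    insert [] (Finset.univ.biUnion fun a => (wordsUpTo n).map ⟨List.cons a, List.cons_injective⟩)

variable {α}

theorem mem_wordsUpTo {n : ℕ} {η : List α} : η ∈ wordsUpTo α n ↔ η.length ≤ n := by
  induction n generalizing η with
  | zero => simp [wordsUpTo]
  | succ n ih => cases η <;> simp [wordsUpTo, ih]

theorem sum_wordsUpTo_succ {M : Type*} [AddCommMonoid M] (n : ℕ) (F : List α → M) :
    ∑ η ∈ wordsUpTo α (n + 1), F η = F [] + ∑ a, ∑ η ∈ wordsUpTo α n, F (a :: η) := by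
  rw [wordsUpTo, Finset.sum_insert (by simp), Finset.sum_biUnion]
  · simp only [Finset.sum_map, Function.Embedding.coeFn_mk]
  · intro a _ b _ hab
    simp only [Function.onFun, Finset.disjoint_left, Finset.mem_map, Function.Embedding.coeFn_mk]
    rintro _ ⟨η, _, rfl⟩ ⟨η', _, h⟩
    exact hab (List.cons_eq_cons.1 h).1.symm

end Words

section PhiW

variable (e : FPS × FPS) (η w : List Bool) (f : FPS)

theorem phiW_false_apply_false : phiW e (false :: η) f (false :: w) = phiW e η f w := by
  simp [phiW, pre, x₀]

theorem phiW_false_apply_true : phiW e (false :: η) f (true :: w) = 0 := by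
  simp [phiW, pre, x₀]

theorem phiW_true_apply_true : phiW e (true :: η) f (true :: w) = shuffle e.1 (phiW e η f) w := by
  simp [phiW, pre, x₀, x₁]

theorem phiW_true_apply_false :
    phiW e (true :: η) f (false :: w) = shuffle e.2 (phiW e η f) w := by
  simp [phiW, pre, x₀, x₁]

variable {η w}

theorem phiW_apply_of_length_lt (h : w.length < η.length) : phiW e η f w = 0 := by
  induction η generalizing w with
  | nil => simp at h
  | cons b η ih =>
    have hsh (c : FPS) (u : List Bool) (hu : u.length < η.length) :
        shuffle c (phiW e η f) u = 0 :=
      shuffle_apply_eq_zero_of_forall_length_le fun v hv => ih (by omega)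
    cases w with
    | nil => cases b <;> simp [phiW, pre]
    | cons x u =>
      have hu : u.length < η.length := by simpa using h
      cases b <;> cases x <;>
        simp [phiW_false_apply_false, phiW_false_apply_true, phiW_true_apply_true,
          phiW_true_apply_false, ih hu, hsh _ _ hu]

end PhiW

section MixedComp

variable (c d : FPS) (e : FPS × FPS)

theorem mixedComp_apply_eq_sum {w : List Bool} {n : ℕ} (hw : w.length ≤ n) :
    mixedComp c e w = ∑ η ∈ wordsUpTo Bool n, c η * phiW e η oneF w :=
  tsum_eq_sum fun η hη => by
    rw [phiW_apply_of_length_lt e oneF (by rw [mem_wordsUpTo] at hη; omega), mul_zero]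

theorem mixedComp_add : mixedComp (c + d) e = mixedComp c e + mixedComp d e := by
  funext w
  simp only [Pi.add_apply, mixedComp_apply_eq_sum _ e le_rfl, add_mul, Finset.sum_add_distrib]

theorem mixedComp_apply_nil : mixedComp c e [] = c [] := by
  rw [mixedComp_apply_eq_sum c e (n := 0) le_rfl]
  simp [wordsUpTo, phiW, oneF]

theorem shuffle_mixedComp_apply (h : FPS) (w : List Bool) :
    shuffle h (mixedComp c e) w =
      ∑ η ∈ wordsUpTo Bool w.length, c η * shuffle h (phiW e η oneF) w := by
  have hagree (u : List Bool) (hu : u.length ≤ w.length) :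
      mixedComp c e u = (∑ η ∈ wordsUpTo Bool w.length, c η • phiW e η oneF) u := by
    simp [mixedComp_apply_eq_sum c e hu, Finset.sum_apply]
  rw [shuffle_apply_congr_right hagree]
  change shuffleLeft h _ w = _
  simp [map_sum, Finset.sum_apply, shuffleLeft]

theorem mixedComp_apply_cons (x : Bool) (w : List Bool) :
    mixedComp c e (x :: w) =
      ∑ η ∈ wordsUpTo Bool w.length, c (false :: η) * phiW e (false :: η) oneF (x :: w) +
        ∑ η ∈ wordsUpTo Bool w.length, c (true :: η) * phiW e (true :: η) oneF (x :: w) := by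
  rw [mixedComp_apply_eq_sum c e le_rfl, List.length_cons, sum_wordsUpTo_succ, Fintype.sum_bool]
  simp [phiW, oneF, add_comm]

theorem leftQuot_true_mixedComp :
    leftQuot true (mixedComp c e) = shuffle e.1 (mixedComp (leftQuot true c) e) := by
  funext w
  rw [leftQuot, mixedComp_apply_cons, shuffle_mixedComp_apply]
  simp [phiW_false_apply_true, phiW_true_apply_true, leftQuot]

theorem leftQuot_false_mixedComp :
    leftQuot false (mixedComp c e) =
      mixedComp (leftQuot false c) e + shuffle e.2 (mixedComp (leftQuot true c) e) := by
  funext w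
  rw [leftQuot, mixedComp_apply_cons, Pi.add_apply, shuffle_mixedComp_apply,
    mixedComp_apply_eq_sum _ e le_rfl]
  simp [phiW_false_apply_false, phiW_true_apply_false, leftQuot]

end MixedComp

theorem mixedComp_shuffle_apply (e : FPS × FPS) :
    ∀ (w : List Bool) (c d : FPS),
      mixedComp (shuffle c d) e w = shuffle (mixedComp c e) (mixedComp d e) w
  | [], c, d => by simp only [mixedComp_apply_nil, shuffle_nil]
  | x :: w, c, d => by
    have hagree (b : Bool) (u : List Bool) (hu : u.length ≤ w.length) :
        mixedComp (leftQuot b (shuffle c d)) e u =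
          (shuffle (mixedComp (leftQuot b c) e) (mixedComp d e) +
            shuffle (mixedComp c e) (mixedComp (leftQuot b d) e)) u := by
      rw [leftQuot_shuffle, mixedComp_add, Pi.add_apply, Pi.add_apply,
        mixedComp_shuffle_apply e u, mixedComp_shuffle_apply e u]
    change leftQuot x (mixedComp (shuffle c d) e) w = _
    rw [shuffle_cons]
    cases x with
    | false =>
      rw [leftQuot_false_mixedComp, leftQuot_false_mixedComp c, leftQuot_false_mixedComp d,
        Pi.add_apply, hagree false w le_rfl, shuffle_apply_congr_right (hagree true)]
      simp only [shuffle_add_left, shuffle_add_right, shuffle_assoc,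
        shuffle_left_comm e.2 (mixedComp c e), Pi.add_apply]
      ring
    | true =>
      rw [leftQuot_true_mixedComp, leftQuot_true_mixedComp c, leftQuot_true_mixedComp d,
        shuffle_apply_congr_right (hagree true)]
      simp only [shuffle_add_right, shuffle_assoc, shuffle_left_comm e.1 (mixedComp c e),
        Pi.add_apply]
termination_by w => w.length

/-- The mixed composition product distributes to the left over the shuffle product. -/
theorem mixedComp_shuffle_distrib (c d : FPS) (e : FPS × FPS) :
    mixedComp (shuffle c d) e = shuffle (mixedComp c e) (mixedComp d e) :=
  funext fun w => mixedComp_shuffle_apply e w c d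
end

section
/- For any word η ∈ X* with X = {x₀, x₁} and pairs of series d_{δ,1} = (d_{L,1}, d_R), d_{δ,2} = (d_{L,2}, d_R) with d_{L,1}, d_{L,2} nonzero, one has ord(φ_{d₁}(η)(1) − φ_{d₂}(η)(1)) ≥ |η| + ord(d_{L,1} − d_{L,2}). -/
/-- Order of a series: minimal word length in the support, `⊤` for the zero series. -/
noncomputable def ord (c : List Bool → ℝ) : ℕ∞ :=
  sInf {n : ℕ∞ | ∃ w, c w ≠ 0 ∧ (w.length : ℕ∞) = n}

/-- `σ` raised to an extended-natural power, with `σ^⊤ = 0`. -/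
noncomputable def upow (σ : ℝ) (n : ℕ∞) : ℝ :=
  if n = ⊤ then 0 else σ ^ n.toNat

/-- The ultrametric distance `dist(c,d) = σ^(ord (c-d))`. -/
noncomputable def udist (σ : ℝ) (c d : List Bool → ℝ) : ℝ :=
  upow σ (ord (c - d))

/-! The order is superadditive under shuffle and grows by one under left catenation,
so `φ_d(η)` raises the order by at least `|η|`. The difference
`D_η = φ_{d₁}(η)e − φ_{d₂}(η)e` satisfies `D_{x₀η} = x₀ D_η` and
`D_{x₁η} = x₁((d_{L,1} − d_{L,2}) ⧢ φ_{d₁}(η)e + d_{L,2} ⧢ D_η) + x₀(d_R ⧢ D_η)`,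
and the bound follows by induction on `η`. -/

theorem le_ord_iff {c : FPS} {m : ℕ∞} : m ≤ ord c ↔ ∀ w, c w ≠ 0 → m ≤ w.length := by
  simp only [ord, le_sInf_iff, Set.mem_ofPred_eq, forall_exists_index, and_imp]
  exact ⟨fun h w hw => h _ w hw rfl, fun h _ w hw hn => hn ▸ h w hw⟩

theorem ord_le_length {c : FPS} {w : List Bool} (h : c w ≠ 0) : ord c ≤ w.length :=
  sInf_le ⟨w, h, rfl⟩

theorem ord_zero : ord 0 = ⊤ :=
  top_unique <| le_ord_iff.2 fun _ h => absurd rfl h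

theorem le_ord_add {m : ℕ∞} {f g : FPS} (hf : m ≤ ord f) (hg : m ≤ ord g) :
    m ≤ ord (f + g) := by
  refine le_ord_iff.2 fun w hw => ?_
  by_cases hfw : f w = 0
  · exact hg.trans (ord_le_length (by simpa [hfw] using hw))
  · exact hf.trans (ord_le_length hfw)

theorem pre_sub (x : Bool) (a b : FPS) : pre x (a - b) = pre x a - pre x b := by
  funext w
  rcases w with _ | ⟨y, u⟩
  · simp [pre]
  · by_cases h : y = x <;> simp [pre, h]

theorem add_one_le_ord_pre {m : ℕ∞} {e : FPS} (x : Bool) (h : m ≤ ord e) :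
    m + 1 ≤ ord (pre x e) := by
  refine le_ord_iff.2 fun w hw => ?_
  rcases w with _ | ⟨y, u⟩
  · exact absurd rfl hw
  · have hu : e u ≠ 0 := by by_cases hy : y = x <;> simp_all [pre]
    simpa using add_le_add_right (h.trans (ord_le_length hu)) 1

theorem exists_of_shuffle_ne_zero (c e : FPS) (w : List Bool) (h : shuffle c e w ≠ 0) :
    ∃ u v, c u ≠ 0 ∧ e v ≠ 0 ∧ u.length + v.length = w.length := by
  induction w generalizing c e with
  | nil =>
    simp only [shuffle] at h
    exact ⟨[], [], left_ne_zero_of_mul h, right_ne_zero_of_mul h, rfl⟩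
  | cons x w ih =>
    simp only [shuffle] at h
    by_cases hc : shuffle (fun u => c (x :: u)) e w = 0
    · obtain ⟨u, v, hu, hv, huv⟩ := ih c (fun v => e (x :: v)) (by simpa [hc] using h)
      exact ⟨u, x :: v, hu, hv, by simp [← huv]; omega⟩
    · obtain ⟨u, v, hu, hv, huv⟩ := ih _ e hc
      exact ⟨x :: u, v, hu, hv, by simp [← huv]; omega⟩

theorem ord_add_ord_le_ord_shuffle (c e : FPS) : ord c + ord e ≤ ord (shuffle c e) := by
  refine le_ord_iff.2 fun w hw => ?_
  obtain ⟨u, v, hu, hv, huv⟩ := exists_of_shuffle_ne_zero c e w hw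
  calc ord c + ord e ≤ u.length + v.length := add_le_add (ord_le_length hu) (ord_le_length hv)
    _ = w.length := by exact_mod_cast huv

theorem le_ord_shuffle_right {m : ℕ∞} {e : FPS} (c : FPS) (h : m ≤ ord e) :
    m ≤ ord (shuffle c e) :=
  h.trans <| le_add_self.trans (ord_add_ord_le_ord_shuffle c e)

theorem shuffle_sub_left (c d e : FPS) : shuffle (c - d) e = shuffle c e - shuffle d e := by
  funext w
  induction w generalizing c d e with
  | nil => simp only [shuffle, Pi.sub_apply]; ring
  | cons x w ih =>
    have hx := ih (fun u => c (x :: u)) (fun u => d (x :: u)) e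
    have hw := ih c d (fun u => e (x :: u))
    simp only [Pi.sub_apply] at hx hw ⊢
    simp only [shuffle]
    exact (congrArg₂ (· + ·) hx hw).trans (by ring)

theorem shuffle_sub_right (c e f : FPS) : shuffle c (e - f) = shuffle c e - shuffle c f := by
  funext w
  induction w generalizing c e f with
  | nil => simp only [shuffle, Pi.sub_apply]; ring
  | cons x w ih =>
    have hx := ih (fun u => c (x :: u)) e f
    have hw := ih c (fun u => e (x :: u)) (fun u => f (x :: u))
    simp only [Pi.sub_apply] at hx hw ⊢
    simp only [shuffle]
    exact (congrArg₂ (· + ·) hx hw).trans (by ring)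

theorem shuffle_sub_shuffle (c d e f : FPS) :
    shuffle c e - shuffle d f = shuffle (c - d) e + shuffle d (e - f) := by
  rw [shuffle_sub_left, shuffle_sub_right, sub_add_sub_cancel]

theorem phiW_cons_false (d : FPS × FPS) (η : List Bool) (e : FPS) :
    phiW d (false :: η) e = pre x₀ (phiW d η e) := rfl

theorem phiW_cons_true (d : FPS × FPS) (η : List Bool) (e : FPS) :
    phiW d (true :: η) e =
      pre x₁ (shuffle d.1 (phiW d η e)) + pre x₀ (shuffle d.2 (phiW d η e)) := rfl

theorem length_add_ord_le_ord_phiW (d : FPS × FPS) (η : List Bool) (e : FPS) :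
    η.length + ord e ≤ ord (phiW d η e) := by
  induction η with
  | nil => simp [phiW]
  | cons x η ih =>
    rw [List.length_cons, Nat.cast_succ, add_right_comm]
    cases x
    · exact add_one_le_ord_pre x₀ ih
    · exact le_ord_add (add_one_le_ord_pre x₁ (le_ord_shuffle_right d.1 ih))
        (add_one_le_ord_pre x₀ (le_ord_shuffle_right d.2 ih))

theorem length_add_ord_add_ord_sub_le_ord_phiW_sub (η : List Bool) (dL₁ dL₂ dR e : FPS) :
    η.length + ord e + ord (dL₁ - dL₂) ≤
      ord (phiW (dL₁, dR) η e - phiW (dL₂, dR) η e) := by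
  induction η with
  | nil => simp [phiW, ord_zero]
  | cons x η ih =>
    set A := phiW (dL₁, dR) η e
    rw [List.length_cons, Nat.cast_succ, add_right_comm (η.length : ℕ∞) 1,
      add_right_comm _ (1 : ℕ∞)]
    cases x
    · rw [phiW_cons_false, phiW_cons_false, ← pre_sub]
      exact add_one_le_ord_pre x₀ ih
    · rw [phiW_cons_true, phiW_cons_true, add_sub_add_comm, ← pre_sub, ← pre_sub,
        shuffle_sub_shuffle, ← shuffle_sub_right]
      have hA : η.length + ord e + ord (dL₁ - dL₂) ≤ ord (shuffle (dL₁ - dL₂) A) :=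
        calc _ = ord (dL₁ - dL₂) + (η.length + ord e) := add_comm _ _
          _ ≤ ord (dL₁ - dL₂) + ord A := add_le_add le_rfl (length_add_ord_le_ord_phiW _ η e)
          _ ≤ _ := ord_add_ord_le_ord_shuffle _ _
      exact le_ord_add (add_one_le_ord_pre x₁ (le_ord_add hA (le_ord_shuffle_right dL₂ ih)))
        (add_one_le_ord_pre x₀ (le_ord_shuffle_right dR ih))

theorem ord_phiW_sub_general (η : List Bool) (dL₁ dL₂ dR : FPS) :
    (η.length : ℕ∞) + ord (dL₁ - dL₂) ≤
      ord (phiW (dL₁, dR) η oneF - phiW (dL₂, dR) η oneF) :=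
  (add_le_add le_self_add le_rfl).trans <|
    length_add_ord_add_ord_sub_le_ord_phiW_sub η dL₁ dL₂ dR oneF

/-- For words, `ord(φ_{d₁}(η)(1) − φ_{d₂}(η)(1)) ≥ |η| + ord(d_{L,1} − d_{L,2})`
whenever `d₁ = (d_{L,1}, d_R)` and `d₂ = (d_{L,2}, d_R)` with `d_{L,1}, d_{L,2} ≠ 0`. -/
theorem ord_phiW_sub (η : List Bool) (dL₁ dL₂ dR : FPS)
    (h₁ : dL₁ ≠ 0) (h₂ : dL₂ ≠ 0) :
    (η.length : ℕ∞) + ord (dL₁ - dL₂) ≤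
      ord (phiW (dL₁, dR) η oneF - phiW (dL₂, dR) η oneF) :=
  ord_phiW_sub_general η dL₁ dL₂ dR
end

section
/- A series c over X = {x₀,x₁} has relative degree r if and only if there exists a pair e_δ = (e_L, e_R) with e_L non-proper such that c = (c_N + x₀^{r-1}x₁) ∘̃ e_δ, where c_N = Σ_k (c, x₀^k) x₀^k is the natural part of c. -/
/-- The natural part `c_N = Σ_k (c, x₀^k) x₀^k` of a series. -/
noncomputable def natPart (c : FPS) : FPS :=
  fun w => if w = List.replicate w.length x₀ then c w else 0

/-- `c` has relative degree `r ≥ 1`: `r` is the largest integer with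
`supp(c_F) ⊆ x₀^{r-1} X*`, and `x₀^{r-1} x₁ ∈ supp(c)`, where `c_F = c - c_N`. -/
def HasRelDeg (c : FPS) (r : ℕ) : Prop :=
  1 ≤ r ∧
  (∀ w, (c - natPart c) w ≠ 0 → List.replicate (r - 1) x₀ <+: w) ∧
  ¬(∀ w, (c - natPart c) w ≠ 0 → List.replicate r x₀ <+: w) ∧
  c (List.replicate (r - 1) x₀ ++ [x₁]) ≠ 0

lemma shuffle_zero_right (c : FPS) : ∀ w, shuffle c (fun _ => 0) w = 0
  | [] => by simp [shuffle]
  | x :: w => by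
      rw [shuffle, shuffle_zero_right, shuffle_zero_right, add_zero]

lemma shuffle_oneF_right (c : FPS) : shuffle c oneF = c := by
  funext w
  induction w generalizing c with
  | nil => simp [shuffle, oneF]
  | cons x w ih =>
      have hshift : (fun u => oneF (x :: u)) = fun _ => 0 := rfl
      rw [shuffle, ih, hshift, shuffle_zero_right, add_zero]

lemma oneF_eq_ind_nil : oneF = ind [] := by
  funext w
  cases w <;> simp [oneF, ind]

lemma pre_ind (x : Bool) (v : List Bool) : pre x (ind v) = ind (x :: v) := by
  funext w
  cases w with
  | nil => simp [pre, ind]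
  | cons y u => by_cases hy : y = x <;> simp [pre, ind, hy]

lemma iterate_pre_apply (x : Bool) (k : ℕ) (g : FPS) (w : List Bool) :
    (pre x)^[k] g w = if List.replicate k x <+: w then g (w.drop k) else 0 := by
  induction k generalizing w with
  | zero => simp
  | succ k ih =>
      rw [Function.iterate_succ_apply']
      cases w with
      | nil => simp [pre]
      | cons y u =>
          by_cases hy : y = x
          · simp [pre, hy, ih, List.replicate_succ]
          · simp [pre, hy, List.replicate_succ, Ne.symm hy]

lemma iterate_pre_replicate_append (x : Bool) (k : ℕ) (g : FPS) (u : List Bool) :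
    (pre x)^[k] g (List.replicate k x ++ u) = g u := by
  simp [iterate_pre_apply]

lemma iterate_pre_ind (x : Bool) (k : ℕ) (v : List Bool) :
    (pre x)^[k] (ind v) = ind (List.replicate k x ++ v) := by
  induction k with
  | zero => rfl
  | succ k ih => rw [Function.iterate_succ_apply', ih, pre_ind, List.replicate_succ, List.cons_append]

lemma eq_iterate_pre_of_support {x : Bool} {k : ℕ} {f : FPS}
    (hsupp : ∀ w, f w ≠ 0 → List.replicate k x <+: w) :
    f = (pre x)^[k] (fun u => f (List.replicate k x ++ u)) := by
  funext w
  rw [iterate_pre_apply]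
  split_ifs with hw
  · obtain ⟨u, rfl⟩ := hw
    simp
  · exact not_not.mp (mt (hsupp w) hw)

lemma eq_pre_x₁_add_pre_x₀ {g : FPS} (h : g [] = 0) :
    g = pre x₁ (fun u => g (x₁ :: u)) + pre x₀ (fun u => g (x₀ :: u)) := by
  funext w
  rcases w with _ | ⟨_ | _, u⟩ <;> simp [pre, h, x₀, x₁]

lemma phiW_append (d : FPS × FPS) (η η' : List Bool) (f : FPS) :
    phiW d (η ++ η') f = phiW d η (phiW d η' f) := by
  induction η with
  | nil => rfl
  | cons x η ih => simp only [List.cons_append, phiW, ih]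

lemma phiW_replicate_x₀ (d : FPS × FPS) (k : ℕ) (f : FPS) :
    phiW d (List.replicate k x₀) f = (pre x₀)^[k] f := by
  induction k with
  | zero => rfl
  | succ k ih => rw [List.replicate_succ, Function.iterate_succ_apply', ← ih]; rfl

lemma phiW_x₁_oneF (d : FPS × FPS) : phiW d [x₁] oneF = pre x₁ d.1 + pre x₀ d.2 := by
  simp [phiW, x₁, shuffle_oneF_right]

lemma phiW_replicate_x₀_append_x₁ (d : FPS × FPS) (k : ℕ) :
    phiW d (List.replicate k x₀ ++ [x₁]) oneF = (pre x₀)^[k] (pre x₁ d.1 + pre x₀ d.2) := by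
  rw [phiW_append, phiW_x₁_oneF, phiW_replicate_x₀]

lemma natPart_replicate (c : FPS) (k : ℕ) :
    natPart c (List.replicate k x₀) = c (List.replicate k x₀) := by
  simp [natPart]

lemma natPart_of_x₁_mem (c : FPS) {w : List Bool} (hw : x₁ ∈ w) : natPart c w = 0 := by
  have hne : w ≠ List.replicate w.length x₀ := fun h => by
    rw [h, List.mem_replicate] at hw
    exact absurd hw.2 (by decide)
  simp [natPart, hne]

lemma hasSum_natPart_mul_phiW (c : FPS) (d : FPS × FPS) (w : List Bool) :
    HasSum (fun η => natPart c η * phiW d η oneF w) (natPart c w) := by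
  have hpow : ∀ k, phiW d (List.replicate k x₀) oneF = ind (List.replicate k x₀) := fun k => by
    rw [phiW_replicate_x₀, oneF_eq_ind_nil, iterate_pre_ind, List.append_nil]
  convert hasSum_single (List.replicate w.length x₀) fun η hη => ?_ using 1
  · by_cases hw : w = List.replicate w.length x₀
    · rw [hpow, ← hw]; simp [ind]
    · simp [natPart, hw, hpow, ind]
  · by_cases hnat : η = List.replicate η.length x₀
    · rw [hnat, hpow]
      have hw : w ≠ List.replicate η.length x₀ := fun hw => hη (by
        rw [hnat, hw, List.length_replicate])
      simp [ind, hw]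
    · simp [natPart, hnat]

lemma mixedComp_natPart_add_ind (c : FPS) (η : List Bool) (d : FPS × FPS) :
    mixedComp (natPart c + ind η) d = natPart c + phiW d η oneF := by
  funext w
  have hind : HasSum (fun η' => ind η η' * phiW d η' oneF w) (phiW d η oneF w) := by
    convert hasSum_single η fun η' hη' => ?_ using 1 <;> simp_all [ind]
  simpa [mixedComp, add_mul] using ((hasSum_natPart_mul_phiW c d w).add hind).tsum_eq

/-- A series has relative degree `r` iff it lies on the orbit of `c_N + x₀^{r-1}x₁`
under the affine feedback transformation group. -/
theorem hasRelDeg_iff_orbit (c : FPS) (r : ℕ) (hr : 1 ≤ r) :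
    HasRelDeg c r ↔
      ∃ e : FPS × FPS, e.1 [] ≠ 0 ∧
        c = mixedComp (natPart c + ind (List.replicate (r - 1) x₀ ++ [x₁])) e := by
  set L := List.replicate (r - 1) x₀
  have horbit : ∀ e : FPS × FPS, c = mixedComp (natPart c + ind (L ++ [x₁])) e ↔
      c - natPart c = (pre x₀)^[r - 1] (pre x₁ e.1 + pre x₀ e.2) := fun e => by
    rw [mixedComp_natPart_add_ind, phiW_replicate_x₀_append_x₁, sub_eq_iff_eq_add']
  have hcF : (c - natPart c) (L ++ [x₁]) = c (L ++ [x₁]) := by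
    simp [natPart_of_x₁_mem]
  simp_rw [horbit]
  constructor
  · rintro ⟨-, hsupp, -, hc⟩
    refine ⟨(fun u => (c - natPart c) (L ++ x₁ :: u), fun u => (c - natPart c) (L ++ x₀ :: u)),
      by simpa [hcF] using hc, ?_⟩
    have hL : (c - natPart c) (L ++ []) = 0 := by simp [L, natPart_replicate]
    conv_lhs => rw [eq_iterate_pre_of_support hsupp]
    exact congrArg _ (eq_pre_x₁_add_pre_x₀ (g := fun u => (c - natPart c) (L ++ u)) hL)
  · rintro ⟨e, he, hc⟩
    have hword : (c - natPart c) (L ++ [x₁]) = e.1 [] := by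
      rw [hc, iterate_pre_replicate_append]
      simp [pre, x₀, x₁]
    refine ⟨hr, fun w hw => ?_, fun hall => ?_, by rwa [← hcF, hword]⟩
    · rw [hc, iterate_pre_apply] at hw
      by_contra hpre
      exact hw (if_neg hpre)
    · have hpre := hall _ (hword ▸ he)
      rw [show r = r - 1 + 1 by omega, List.replicate_succ', List.prefix_append_right_inj] at hpre
      simp [x₀, x₁] at hpre
end
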